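/- (Eakin-Nagata type theorem for uniformly S-Noetherian rings) Let R be a commutative ring, S an anti-Archimedean multiplicative subset of R, and T a ring extension of R that is S-finite as an R-module. Then the following are equivalent: (1) R is a uniformly S-Noetherian ring; (2) T is a uniformly S-Noetherian ring; (3) there exists s ∈ S such that 𝔭T is an s-finite ideal of T for every prime ideal 𝔭 of R; (4) T is a uniformly S-Noetherian R-module. -/

import Mathlib

/-- A submodule `N` is `s`-finite if there is a finitely generated submodule `F`
with `s N ⊆ F ⊆ N`. -/
def SFinSub {R M : Type*} [CommRing R] [AddCommGroup M] [Module R M]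
    (s : R) (N : Submodule R M) : Prop :=
  ∃ F : Submodule R M, F.FG ∧ F ≤ N ∧ ∀ x ∈ N, s • x ∈ F

/-- `S` is anti-Archimedean: for every `s ∈ S`, `(⋂_{n ≥ 1} sⁿR) ∩ S ≠ ∅`. -/
def AntiArchimedean {R : Type*} [CommRing R] (S : Submonoid R) : Prop :=
  ∀ s ∈ S, ∃ t ∈ S, ∀ n : ℕ, 1 ≤ n → s ^ n ∣ t

/-!
Write `s₀ T ⊆ G` with `G` a finitely generated `R`-submodule and let every `𝔭 T` be `s₁`-finite;
put `s = s₀ s₁`. By Cohen's argument every `R`-submodule of `T` is `sⁿ`-finite for some `n`: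
otherwise Zorn's lemma (finitely generated submodules are compact) yields a submodule `N` maximal
among those that are not. Maximality gives `a • x ∈ N → x ∈ N ∨ a T ⊆ N`, so `𝔭 = (N : T)` is
prime, `R/𝔭` embeds into `T/N`, and every submodule of `(T/N)ᴷ` is `sⁿ`-finite. Hence so is every
submodule of the image of `G` in the `R/𝔭`-module `T/𝔭T`; since `𝔭T` is `s₁`-finite and
`s₀ N ⊆ N ∩ G`, `N` is `s^(m+1)`-finite after all. The anti-Archimedean property then replaces the
varying powers `sⁿ` by a single `t ∈ S`.
-/

open Submodule

section SFinite

variable {R M A B : Type*} [CommRing R] [AddCommGroup M] [Module R M]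
  [AddCommGroup A] [Module R A] [AddCommGroup B] [Module R B] {s u v a : R} {N : Submodule R M}

theorem Submodule.exists_fg_le_map_eq {f : M →ₗ[R] A} {F : Submodule R A} (hF : F.FG)
    (hFN : F ≤ N.map f) : ∃ F' : Submodule R M, F'.FG ∧ F' ≤ N ∧ F'.map f = F := by
  obtain ⟨t, ht, rfl⟩ := fg_def.1 hF
  have htN : t ⊆ f '' N := by rw [← map_coe]; exact subset_span.trans hFN
  obtain ⟨t', ht'N, ht', rfl⟩ := Set.exists_subset_image_finite_and.1 ⟨t, htN, ht, rfl⟩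
  exact ⟨span R t', fg_def.2 ⟨t', ht', rfl⟩, span_le.2 ht'N, map_span f t'⟩

namespace SFinSub

theorem of_dvd {t : R} (hst : s ∣ t) (h : SFinSub s N) : SFinSub t N := by
  obtain ⟨c, rfl⟩ := hst
  obtain ⟨F, hF, hFN, hsF⟩ := h
  exact ⟨F, hF, hFN, fun x hx => by rw [mul_comm, mul_smul]; exact F.smul_mem c (hsF x hx)⟩

theorem map (f : M →ₗ[R] A) (h : SFinSub s N) : SFinSub s (N.map f) := by
  obtain ⟨F, hF, hFN, hsF⟩ := h
  refine ⟨F.map f, hF.map f, map_mono hFN, ?_⟩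
  rintro _ ⟨x, hx, rfl⟩
  exact ⟨s • x, hsF x hx, f.map_smul s x⟩

theorem map_of_ker_le (f : M →ₗ[R] A) (g : M →ₗ[R] B) (hker : LinearMap.ker f ≤ LinearMap.ker g)
    (h : SFinSub s (N.map f)) : SFinSub s (N.map g) := by
  obtain ⟨F, hF, hFN, hsF⟩ := h
  obtain ⟨F', hF', hF'N, rfl⟩ := exists_fg_le_map_eq hF hFN
  refine ⟨F'.map g, hF'.map g, map_mono hF'N, ?_⟩
  rintro _ ⟨x, hx, rfl⟩
  obtain ⟨y, hy, hxy⟩ := hsF (f x) ⟨x, hx, rfl⟩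
  have hyx : y - s • x ∈ LinearMap.ker g := hker (by simp [hxy])
  rw [LinearMap.mem_ker, map_sub, sub_eq_zero] at hyx
  exact ⟨y, hy, by rw [hyx, map_smul]⟩

theorem of_map_injective (f : M →ₗ[R] A) (hf : Function.Injective f)
    (h : SFinSub s (N.map f)) : SFinSub s N := by
  simpa using h.map_of_ker_le f LinearMap.id (by simp [LinearMap.ker_eq_bot.2 hf])

theorem of_inf_ker_of_map (f : M →ₗ[R] A) (hker : SFinSub u (N ⊓ LinearMap.ker f))
    (hmap : SFinSub v (N.map f)) : SFinSub (u * v) N := by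
  obtain ⟨K, hK, hKN, huK⟩ := hker
  obtain ⟨F, hF, hFN, hvF⟩ := hmap
  obtain ⟨F', hF', hF'N, rfl⟩ := exists_fg_le_map_eq hF hFN
  refine ⟨K ⊔ F', hK.sup hF', sup_le (hKN.trans inf_le_left) hF'N, fun x hx => ?_⟩
  obtain ⟨y, hy, hxy⟩ := hvF (f x) ⟨x, hx, rfl⟩
  have hdiff : v • x - y ∈ N ⊓ LinearMap.ker f :=
    ⟨N.sub_mem (N.smul_mem v hx) (hF'N hy), by simp [hxy]⟩
  have hsplit : (u * v) • x = u • (v • x - y) + u • y := by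
    rw [mul_smul, ← smul_add, sub_add_cancel]
  rw [hsplit]
  exact add_mem (mem_sup_left (huK _ hdiff)) (mem_sup_right (F'.smul_mem u hy))

theorem of_le_of_smul_mem {N' : Submodule R M} (hN'N : N' ≤ N) (hsmul : ∀ x ∈ N, a • x ∈ N')
    (h : SFinSub u N') : SFinSub (u * a) N := by
  obtain ⟨F, hF, hFN', huF⟩ := h
  exact ⟨F, hF, hFN'.trans hN'N, fun x hx => by rw [mul_smul]; exact huF _ (hsmul x hx)⟩

theorem of_sup_range_lsmul_of_comap_lsmul
    (hsup : SFinSub u (N ⊔ LinearMap.range (LinearMap.lsmul R M a)))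
    (hcolon : SFinSub v (N.comap (LinearMap.lsmul R M a))) : SFinSub (v * u) N := by
  obtain ⟨P, hP, hPN, huP⟩ := hsup
  obtain ⟨Q, hQ, hQN, hvQ⟩ := hcolon
  have hsup_eq : N ⊔ LinearMap.range (LinearMap.lsmul R M a) =
      (N.prod ⊤).map (LinearMap.id.coprod (LinearMap.lsmul R M a)) := by
    rw [LinearMap.map_coprod_prod, map_id, LinearMap.range_eq_map]
  obtain ⟨P', hP', hP'N, rfl⟩ := exists_fg_le_map_eq hP (hsup_eq ▸ hPN)
  refine ⟨P'.map (LinearMap.fst R M M) ⊔ Q.map (LinearMap.lsmul R M a),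
    (hP'.map _).sup (hQ.map _), sup_le ?_ ?_, fun x hx => ?_⟩
  · rintro _ ⟨z, hz, rfl⟩
    exact (hP'N hz).1
  · rintro _ ⟨y, hy, rfl⟩
    exact hQN hy
  obtain ⟨z, hz, hzx⟩ := huP x (mem_sup_left hx)
  simp only [LinearMap.coprod_apply, LinearMap.id_apply, LinearMap.lsmul_apply] at hzx
  have hz₂ : z.2 ∈ N.comap (LinearMap.lsmul R M a) := by
    change a • z.2 ∈ N
    rw [eq_sub_of_add_eq' hzx]
    exact N.sub_mem (N.smul_mem u hx) (hP'N hz).1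
  have hsplit : (v * u) • x = (v • z).1 + a • (v • z.2) := by
    rw [mul_smul, ← hzx, Prod.smul_fst, smul_add, smul_comm a v]
  rw [hsplit]
  exact add_mem (mem_sup_left ⟨v • z, P'.smul_mem v hz, rfl⟩) (mem_sup_right ⟨_, hvQ _ hz₂, rfl⟩)

theorem ideal_map {S : Type*} [CommRing S] (f : R →+* S) {I : Ideal R} (h : SFinSub s I) :
    SFinSub (f s) (I.map f) := by
  obtain ⟨F, hF, hFI, hsF⟩ := h
  refine ⟨Ideal.map f F, Ideal.FG.map hF f, Ideal.map_mono hFI, fun x hx => ?_⟩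
  have hcolon : I.map f ≤ (Ideal.map f F).colon {f s} := Ideal.map_le_iff_le_comap.2 fun r hr => by
    rw [Ideal.mem_comap, mem_colon_singleton, smul_eq_mul, ← map_mul, mul_comm]
    exact Ideal.mem_map_of_mem f (hsF r hr)
  simpa [mul_comm] using mem_colon_singleton.1 (hcolon hx)

variable {T : Type*} [CommRing T] [Algebra R T]

theorem of_restrictScalars {C : Type*} [AddCommGroup C] [Module T C] [Module R C]
    [IsScalarTower R T C] {N : Submodule T C} (h : SFinSub s (N.restrictScalars R)) :
    SFinSub (algebraMap R T s) N := by
  obtain ⟨F, hF, hFN, hsF⟩ := h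
  refine ⟨span T F, hF.span, span_le.2 hFN, fun x hx => ?_⟩
  rw [algebraMap_smul]
  exact subset_span (hsF x hx)

theorem restrictScalars_of_top {s₀ : R} {J : Ideal T} (htop : SFinSub s₀ (⊤ : Submodule R T))
    (hJ : SFinSub (algebraMap R T s) J) : SFinSub (s₀ * s) (J.restrictScalars R) := by
  obtain ⟨G, hG, -, hs₀G⟩ := htop
  obtain ⟨F, ⟨t, rfl⟩, hFJ, hsF⟩ := hJ
  have htJ : span R (t : Set T) ≤ J.restrictScalars R :=
    (span_le_restrictScalars R T _).trans (restrictScalars_mono R hFJ)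
  refine ⟨G * span R t, hG.mul (fg_span t.finite_toSet), ?_, fun x hx => ?_⟩
  · exact mul_le.2 fun g _ y hy => J.mul_mem_left g (htJ hy)
  obtain ⟨c, -, hc⟩ := mem_span_finset.1 (hsF x hx)
  have hsplit : (s₀ * s) • x = ∑ y ∈ t, (s₀ • c y) * y := by
    rw [mul_smul, Algebra.smul_def s, ← smul_eq_mul, ← hc, Finset.smul_sum]
    simp only [smul_eq_mul, smul_mul_assoc]
  rw [hsplit]
  exact sum_mem fun y hy => mul_mem_mul (hs₀G _ trivial) (subset_span hy)

end SFinSub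

end SFinite

section PowFinite

variable {R M A B : Type*} [CommRing R] [AddCommGroup M] [Module R M]
  [AddCommGroup A] [Module R A] [AddCommGroup B] [Module R B] {s : R}

def IsSPowNoetherian (s : R) (M : Type*) [AddCommGroup M] [Module R M] : Prop :=
  ∀ N : Submodule R M, ∃ n : ℕ, SFinSub (s ^ n) N

namespace IsSPowNoetherian

theorem exists_sFinSub_of_le_range (hA : IsSPowNoetherian s A) (f : M →ₗ[R] A) (g : M →ₗ[R] B)
    (hker : LinearMap.ker f ≤ LinearMap.ker g) {X : Submodule R B} (hX : X ≤ LinearMap.range g) :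
    ∃ n : ℕ, SFinSub (s ^ n) X := by
  obtain ⟨n, hn⟩ := hA ((X.comap g).map f)
  have := hn.map_of_ker_le f g hker
  rw [map_comap_eq, inf_eq_right.2 hX] at this
  exact ⟨n, this⟩

theorem of_injective (hA : IsSPowNoetherian s A) (f : M →ₗ[R] A) (hf : Function.Injective f) :
    IsSPowNoetherian s M :=
  fun X => (hA (X.map f)).imp fun _ h => h.of_map_injective f hf

theorem of_subsingleton [Subsingleton M] : IsSPowNoetherian s M :=
  fun _ => ⟨0, ⊥, fg_bot, bot_le, fun x _ => by simp [Subsingleton.elim x 0]⟩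

theorem prod (hA : IsSPowNoetherian s A) (hB : IsSPowNoetherian s B) :
    IsSPowNoetherian s (A × B) := fun N => by
  obtain ⟨m, hm⟩ := hA (N.comap (LinearMap.inl R A B))
  obtain ⟨n, hn⟩ := hB (N.map (LinearMap.snd R A B))
  refine ⟨m + n, pow_add s m n ▸ SFinSub.of_inf_ker_of_map (LinearMap.snd R A B) ?_ hn⟩
  rw [LinearMap.ker_snd, inf_comm, ← map_comap_eq]
  exact hm.map _

theorem pi (hA : IsSPowNoetherian s A) : ∀ n : ℕ, IsSPowNoetherian s (Fin n → A)
  | 0 => of_subsingleton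
  | n + 1 => (hA.prod (pi hA n)).of_injective (Fin.consLinearEquiv R fun _ => A).symm.toLinearMap
      (LinearEquiv.injective _)

end IsSPowNoetherian

theorem AntiArchimedean.exists_forall_sFinSub {S : Submonoid R} (hS : AntiArchimedean S)
    (hs : s ∈ S) (h : IsSPowNoetherian s M) : ∃ t ∈ S, ∀ N : Submodule R M, SFinSub t N := by
  obtain ⟨t, ht, hdvd⟩ := hS s hs
  refine ⟨t, ht, fun N => ?_⟩
  obtain ⟨n, hn⟩ := h N
  refine hn.of_dvd ?_
  rcases Nat.eq_zero_or_pos n with rfl | hn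
  · exact (pow_zero s).symm ▸ one_dvd t
  · exact hdvd n hn

end PowFinite

section Cohen

variable {R M : Type*} [CommRing R] [AddCommGroup M] [Module R M] {s : R} {N : Submodule R M}

theorem exists_maximal_forall_not_sFinSub_pow (h : ¬IsSPowNoetherian s M) :
    ∃ N : Submodule R M, Maximal (fun N => ∀ n : ℕ, ¬SFinSub (s ^ n) N) N := by
  simp only [IsSPowNoetherian, not_forall, not_exists] at h
  obtain ⟨N₀, hN₀⟩ := h
  have hchain : ∀ c ⊆ {N : Submodule R M | ∀ n, ¬SFinSub (s ^ n) N}, IsChain (· ≤ ·) c →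
      c.Nonempty → ∀ n, ¬SFinSub (s ^ n) (sSup c) := by
    rintro c hc hchain hne n ⟨F, hF, hFc, hsF⟩
    obtain ⟨N', hN'c, hFN'⟩ := (CompleteLattice.isCompactElement_iff_le_of_directed_sSup_le _ F).1
      ((fg_iff_compact F).1 hF) c hne hchain.directedOn hFc
    exact hc hN'c n ⟨F, hF, hFN', fun x hx => hsF x (le_sSup hN'c hx)⟩
  obtain ⟨N, -, hN⟩ := zorn_le_nonempty₀ _
    (fun c hc hc' N₁ hN₁ => ⟨sSup c, hchain c hc hc' ⟨N₁, hN₁⟩, fun _ => le_sSup⟩) N₀ hN₀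
  exact ⟨N, hN⟩

theorem exists_sFinSub_pow_of_maximal_of_gt
    (hN : Maximal (fun N : Submodule R M => ∀ n, ¬SFinSub (s ^ n) N) N)
    {P : Submodule R M} (hNP : N < P) : ∃ n : ℕ, SFinSub (s ^ n) P := by
  simpa using hN.not_prop_of_gt hNP

theorem mem_or_mem_colon_of_maximal
    (hN : Maximal (fun N : Submodule R M => ∀ n, ¬SFinSub (s ^ n) N) N) {a : R} {x : M}
    (hax : a • x ∈ N) : x ∈ N ∨ a ∈ N.colon Set.univ := by
  by_contra! h
  obtain ⟨hx, ha⟩ := h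
  obtain ⟨y, hy⟩ : ∃ y, a • y ∉ N := by simpa [mem_colon] using ha
  obtain ⟨k, hk⟩ := exists_sFinSub_pow_of_maximal_of_gt hN
    (SetLike.lt_iff_le_and_exists.2 ⟨fun z hz => N.smul_mem a hz, x, hax, hx⟩ :
      N < N.comap (LinearMap.lsmul R M a))
  obtain ⟨m, hm⟩ := exists_sFinSub_pow_of_maximal_of_gt hN
    (SetLike.lt_iff_le_and_exists.2 ⟨le_sup_left, a • y, mem_sup_right ⟨y, rfl⟩, hy⟩ :
      N < N ⊔ LinearMap.range (LinearMap.lsmul R M a))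
  exact hN.prop (k + m) (pow_add s k m ▸ hm.of_sup_range_lsmul_of_comap_lsmul hk)

theorem colon_isPrime_of_maximal
    (hN : Maximal (fun N : Submodule R M => ∀ n, ¬SFinSub (s ^ n) N) N)
    (hNtop : N ≠ ⊤) : (N.colon Set.univ).IsPrime := by
  refine Ideal.isPrime_iff.2
    ⟨fun h => hNtop ?_, fun {a b} hab => or_iff_not_imp_left.2 fun ha => ?_⟩
  · exact eq_top_iff.2 fun x _ => (colon_eq_top_iff_subset _).1 h trivial
  · refine mem_colon.2 fun y _ => ?_
    have : a • b • y ∈ N := by rw [smul_smul]; exact mem_colon.1 hab y trivial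
    exact (mem_or_mem_colon_of_maximal hN this).resolve_right ha

theorem isSPowNoetherian_quotient_of_maximal
    (hN : Maximal (fun N : Submodule R M => ∀ n, ¬SFinSub (s ^ n) N) N) :
    IsSPowNoetherian s (M ⧸ N) := fun X => by
  have hmap := map_comap_eq_of_surjective (mkQ_surjective N) X
  rcases (le_comap_mkQ N X).lt_or_eq with hlt | heq
  · obtain ⟨n, hn⟩ := exists_sFinSub_pow_of_maximal_of_gt hN hlt
    exact ⟨n, hmap ▸ hn.map N.mkQ⟩
  · rw [← heq, mkQ_map_self] at hmap
    exact ⟨0, ⊥, fg_bot, bot_le, by simp [← hmap]⟩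

theorem exists_sFinSub_pow_of_maximal_of_le_fg
    (hN : Maximal (fun N : Submodule R M => ∀ n, ¬SFinSub (s ^ n) N) N) (hNtop : N ≠ ⊤)
    {C : Type*} [AddCommGroup C] [Module R C] (hC : Module.IsTorsionBySet R C (N.colon Set.univ))
    {G X : Submodule R C} (hG : G.FG) (hXG : X ≤ G) : ∃ n : ℕ, SFinSub (s ^ n) X := by
  obtain ⟨x, hx⟩ : ∃ x, x ∉ N := by simpa [eq_top_iff, SetLike.le_def] using hNtop
  obtain ⟨K, g, rfl⟩ := fg_iff_exists_fin_generating_family.1 hG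
  -- `r ↦ (r k • x̄)ₖ` has kernel `𝔭ᴷ` because `x ∉ N`, and `𝔭` kills `C`.
  refine ((isSPowNoetherian_quotient_of_maximal hN).pi K).exists_sFinSub_of_le_range
    ((LinearMap.toSpanSingleton R (M ⧸ N) (N.mkQ x)).compLeft (Fin K))
    (Fintype.linearCombination R g) (fun r hr => ?_) (by rwa [Fintype.range_linearCombination])
  have hrx : ∀ k, r k • x ∈ N := fun k => by
    simpa [← Submodule.Quotient.mk_smul, Quotient.mk_eq_zero] using congrFun hr k
  have hrk : ∀ k, r k ∈ N.colon Set.univ := fun k =>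
    (mem_or_mem_colon_of_maximal hN (hrx k)).resolve_left hx
  simp [Fintype.linearCombination_apply, fun k => @hC (g k) ⟨r k, hrk k⟩]

theorem isSPowNoetherian_of_sFinSub_top_of_sFinSub_prime_smul_top {s₀ s₁ : R}
    (htop : SFinSub s₀ (⊤ : Submodule R M))
    (hprime : ∀ p : Ideal R, p.IsPrime → SFinSub s₁ (p • ⊤ : Submodule R M)) :
    IsSPowNoetherian (s₀ * s₁) M := by
  by_contra hM
  obtain ⟨N, hN⟩ := exists_maximal_forall_not_sFinSub_pow hM
  have hNtop : N ≠ ⊤ := by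
    rintro rfl
    exact hN.prop 1 (htop.of_dvd ⟨s₁, by ring⟩)
  set p := N.colon Set.univ
  set pM : Submodule R M := p • ⊤
  have hpN : pM ≤ N := smul_le.2 fun r hr y _ => mem_colon.1 hr y trivial
  obtain ⟨G, hG, -, hs₀G⟩ := htop
  set N' := N ⊓ G ⊔ pM
  obtain ⟨m, hm⟩ := exists_sFinSub_pow_of_maximal_of_le_fg hN hNtop
    (Module.isTorsionBySet_quotient_ideal_smul M p) (hG.map pM.mkQ) (X := N'.map pM.mkQ)
    (by rw [Submodule.map_sup, mkQ_map_self, sup_bot_eq]; exact map_mono inf_le_right)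
  have hN' : SFinSub (s₁ * (s₀ * s₁) ^ m) N' := by
    refine SFinSub.of_inf_ker_of_map pM.mkQ ?_ hm
    rw [ker_mkQ, inf_eq_right.2 le_sup_right]
    exact hprime p (colon_isPrime_of_maximal hN hNtop)
  exact hN.prop (m + 1) ((hN'.of_le_of_smul_mem (sup_le inf_le_left hpN)
    (fun x hx => mem_sup_left (mem_inf.2 ⟨N.smul_mem s₀ hx, hs₀G x trivial⟩))).of_dvd ⟨1, by ring⟩)

end Cohen

theorem eakin_nagata_uniformly_S_noetherian
    {R T : Type*} [CommRing R] [CommRing T] [Algebra R T]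
    (hinj : Function.Injective (algebraMap R T))
    (S : Submonoid R) (hS : AntiArchimedean S)
    (hTfin : ∃ s ∈ S, SFinSub s (⊤ : Submodule R T)) :
    List.TFAE
      [ -- (1) R is a uniformly S-Noetherian ring
        ∃ s ∈ S, ∀ I : Ideal R, SFinSub s I,
        -- (2) T is a uniformly S-Noetherian ring
        ∃ s ∈ S, ∀ J : Ideal T, ∃ F : Ideal T, F.FG ∧ F ≤ J ∧
          ∀ x ∈ J, algebraMap R T s * x ∈ F,
        -- (3) there is s ∈ S such that pT is an s-finite ideal of T
        --     for every prime ideal p of R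
        ∃ s ∈ S, ∀ p : Ideal R, p.IsPrime →
          ∃ F : Ideal T, F.FG ∧ F ≤ p.map (algebraMap R T) ∧
            ∀ x ∈ p.map (algebraMap R T), algebraMap R T s * x ∈ F,
        -- (4) T is a uniformly S-Noetherian R-module
        ∃ s ∈ S, ∀ N : Submodule R T, SFinSub s N ] := by
  obtain ⟨s₀, hs₀, htop⟩ := hTfin
  tfae_have 1 → 3
  | ⟨s, hs, h⟩ => ⟨s, hs, fun p _ => (h p).ideal_map (algebraMap R T)⟩
  tfae_have 3 → 4
  | ⟨s, hs, h⟩ => by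
    have hprime (p : Ideal R) (hp : p.IsPrime) : SFinSub (s₀ * s) (p • ⊤ : Submodule R T) :=
      (Ideal.smul_top_eq_map (S := T) p) ▸ htop.restrictScalars_of_top (h p hp)
    exact hS.exists_forall_sFinSub (S.mul_mem hs₀ (S.mul_mem hs₀ hs))
      (isSPowNoetherian_of_sFinSub_top_of_sFinSub_prime_smul_top htop hprime)
  tfae_have 4 → 1
  | ⟨s, hs, h⟩ => ⟨s, hs, fun I => (h _).of_map_injective (Algebra.linearMap R T) hinj⟩
  tfae_have 4 → 2
  | ⟨s, hs, h⟩ => ⟨s, hs, fun J => (h (J.restrictScalars R)).of_restrictScalars⟩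
  tfae_have 2 → 3
  | ⟨s, hs, h⟩ => ⟨s, hs, fun p _ => h _⟩
  tfae_finish
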